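/- Let G be a finite group with a symmetric generating set S, and let Γ = C(G,S) be the associated Cayley graph with combinatorial Laplacian Δ = |S|·Id − A. Then the smallest nonzero eigenvalue λ₁ of Δ satisfies λ₁ ≥ 1/(|S|·diam(Γ)²), where diam(Γ) is the diameter of the Cayley graph. -/

import Mathlib

/-!
For an eigenvector `v` of `Δ` with eigenvalue `λ ≠ 0` we have `∑ v = 0`, since the columns of
`Δ` sum to zero, and `Q := ∑_{s ∈ S} ∑_x (v(sx) - v(x))² = 2λ‖v‖²`. Writing `g` as a word of
length at most `D` in `S` and telescoping along it, Minkowski's inequality gives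
`∑_x (v(gx) - v(x))² ≤ D² Q` for every `g`. Averaging over `g` and using `∑ v = 0`, the left
side sums to `2|G|‖v‖²`, so `2|G|‖v‖² ≤ 2|G| D² λ ‖v‖²`, i.e. `λ ≥ 1/D² ≥ 1/(|S| D²)`.
-/

open Finset Matrix

lemma sum_add_sq_le_of_sum_sq_le {ι : Type*} (t : Finset ι) {a b : ι → ℝ} {A B Q : ℝ}
    (hA : 0 ≤ A) (hB : 0 ≤ B) (hQ : 0 ≤ Q)
    (ha : ∑ i ∈ t, a i ^ 2 ≤ A ^ 2 * Q) (hb : ∑ i ∈ t, b i ^ 2 ≤ B ^ 2 * Q) :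
    ∑ i ∈ t, (a i + b i) ^ 2 ≤ (A + B) ^ 2 * Q := by
  have hab : ∑ i ∈ t, a i * b i ≤ A * B * Q := by
    refine abs_le_of_sq_le_sq' ?_ (by positivity) |>.2
    calc (∑ i ∈ t, a i * b i) ^ 2 ≤ (∑ i ∈ t, a i ^ 2) * ∑ i ∈ t, b i ^ 2 :=
          sum_mul_sq_le_sq_mul_sq t a b
      _ ≤ (A ^ 2 * Q) * (B ^ 2 * Q) :=
          mul_le_mul ha hb (sum_nonneg fun _ _ => sq_nonneg _) (by positivity)
      _ = (A * B * Q) ^ 2 := by ring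
  calc ∑ i ∈ t, (a i + b i) ^ 2
      = ∑ i ∈ t, a i ^ 2 + 2 * ∑ i ∈ t, a i * b i + ∑ i ∈ t, b i ^ 2 := by
        simp only [add_sq, sum_add_distrib, mul_sum, mul_assoc]
    _ ≤ A ^ 2 * Q + 2 * (A * B * Q) + B ^ 2 * Q := by gcongr
    _ = (A + B) ^ 2 * Q := by ring

section

variable {G : Type*} [Group G] [Fintype G]

lemma sum_comp_mul_left {M : Type*} [AddCommMonoid M] (g : G) (f : G → M) :
    ∑ x, f (g * x) = ∑ x, f x :=
  Equiv.sum_comp (Equiv.mulLeft g) f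

lemma sum_comp_mul_right {M : Type*} [AddCommMonoid M] (g : G) (f : G → M) :
    ∑ x, f (x * g) = ∑ x, f x :=
  Equiv.sum_comp (Equiv.mulRight g) f

def cayleyEnergy (S : Finset G) (f : G → ℝ) : ℝ :=
  ∑ s ∈ S, ∑ x, (f (s * x) - f x) ^ 2

lemma cayleyEnergy_nonneg (S : Finset G) (f : G → ℝ) : 0 ≤ cayleyEnergy S f :=
  sum_nonneg fun _ _ => sum_nonneg fun _ _ => sq_nonneg _

lemma sum_sq_sub_le_cayleyEnergy {S : Finset G} {s : G} (hs : s ∈ S) (f : G → ℝ) :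
    ∑ x, (f (s * x) - f x) ^ 2 ≤ cayleyEnergy S f :=
  single_le_sum (f := fun s => ∑ x, (f (s * x) - f x) ^ 2)
    (fun _ _ => sum_nonneg fun _ _ => sq_nonneg _) hs

lemma sum_sq_sub_list_prod_le {S : Finset G} (f : G → ℝ) {l : List G} (hl : ∀ s ∈ l, s ∈ S) :
    ∑ x, (f (l.prod * x) - f x) ^ 2 ≤ (l.length : ℝ) ^ 2 * cayleyEnergy S f := by
  induction l with
  | nil => simp
  | cons s t ih =>
    have hs : ∑ x, (f (s * (t.prod * x)) - f (t.prod * x)) ^ 2 ≤ 1 ^ 2 * cayleyEnergy S f := by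
      rw [one_pow, one_mul, sum_comp_mul_left t.prod (fun y => (f (s * y) - f y) ^ 2)]
      exact sum_sq_sub_le_cayleyEnergy (hl s List.mem_cons_self) f
    have ht := ih fun a ha => hl a (List.mem_cons_of_mem s ha)
    calc ∑ x, (f ((s :: t).prod * x) - f x) ^ 2
        = ∑ x, ((f (s * (t.prod * x)) - f (t.prod * x)) + (f (t.prod * x) - f x)) ^ 2 := by
          simp only [List.prod_cons, mul_assoc, sub_add_sub_cancel]
      _ ≤ (1 + t.length) ^ 2 * cayleyEnergy S f :=
          sum_add_sq_le_of_sum_sq_le _ zero_le_one (Nat.cast_nonneg _) (cayleyEnergy_nonneg S f) hs ht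
      _ = ((s :: t).length : ℝ) ^ 2 * cayleyEnergy S f := by
          rw [List.length_cons, Nat.cast_succ, add_comm]

lemma sum_sum_sq_sub_mul_left_eq (f : G → ℝ) :
    ∑ g, ∑ x, (f (g * x) - f x) ^ 2 = 2 * Fintype.card G * ∑ x, f x ^ 2 - 2 * (∑ x, f x) ^ 2 := by
  calc ∑ g, ∑ x, (f (g * x) - f x) ^ 2 = ∑ x, ∑ y, (f y - f x) ^ 2 := by
        rw [sum_comm]
        exact sum_congr rfl fun x _ => sum_comp_mul_right x fun y => (f y - f x) ^ 2
    _ = ∑ x, ∑ y, (f y ^ 2 + f x ^ 2 - 2 * f x * f y) :=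
        sum_congr rfl fun x _ => sum_congr rfl fun y _ => by ring
    _ = 2 * Fintype.card G * ∑ x, f x ^ 2 - 2 * (∑ x, f x) ^ 2 := by
        simp only [sum_add_distrib, sum_sub_distrib, sum_const, card_univ, nsmul_eq_mul, ← mul_sum,
          ← sum_mul]
        ring

lemma sum_sq_sub_mul_left_eq (g : G) (f : G → ℝ) :
    ∑ x, (f (g * x) - f x) ^ 2 = 2 * ∑ x, (f x - f (g * x)) * f x := by
  have h := sum_comp_mul_left g fun y => f y ^ 2
  calc ∑ x, (f (g * x) - f x) ^ 2
      = ∑ x, f (g * x) ^ 2 + ∑ x, f x ^ 2 - 2 * ∑ x, f (g * x) * f x := by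
        simp only [sub_sq, sum_add_distrib, sum_sub_distrib, mul_sum, mul_assoc]
        ring
    _ = 2 * ∑ x, (f x - f (g * x)) * f x := by
        rw [h]
        simp only [sub_mul, sum_sub_distrib, sq]
        ring

variable [DecidableEq G]

def cayleyLaplacian (S : Finset G) : Matrix G G ℝ :=
  (S.card : ℝ) • (1 : Matrix G G ℝ) - Matrix.of fun x y => ((S.filter fun s => s * x = y).card : ℝ)

lemma cayleyLaplacian_mulVec_apply (S : Finset G) (f : G → ℝ) (x : G) :
    (cayleyLaplacian S *ᵥ f) x = S.card * f x - ∑ s ∈ S, f (s * x) := by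
  rw [cayleyLaplacian, sub_mulVec, smul_mulVec, one_mulVec, Pi.sub_apply, Pi.smul_apply,
    smul_eq_mul, sub_right_inj]
  simp only [mulVec, dotProduct, of_apply, card_filter, Nat.cast_sum, Nat.cast_ite,
    Nat.cast_one, Nat.cast_zero, sum_mul, ite_mul, one_mul, zero_mul]
  rw [sum_comm]
  simp

lemma sum_cayleyLaplacian_mulVec (S : Finset G) (f : G → ℝ) :
    ∑ x, (cayleyLaplacian S *ᵥ f) x = 0 := by
  simp only [cayleyLaplacian_mulVec_apply, sum_sub_distrib, ← mul_sum]
  rw [sum_comm]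
  simp only [fun s => sum_comp_mul_left s f, sum_const, nsmul_eq_mul, sub_self]

lemma cayleyEnergy_eq (S : Finset G) (f : G → ℝ) :
    cayleyEnergy S f = 2 * ∑ x, (cayleyLaplacian S *ᵥ f) x * f x := by
  rw [cayleyEnergy, sum_congr rfl fun s _ => sum_sq_sub_mul_left_eq s f, ← mul_sum, sum_comm]
  congr 1
  refine sum_congr rfl fun x _ => ?_
  rw [← sum_mul, sum_sub_distrib, sum_const, nsmul_eq_mul, cayleyLaplacian_mulVec_apply]

theorem one_le_sq_mul_of_cayleyLaplacian_mulVec_eq {S : Finset G} {D : ℕ}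
    (hD : ∀ g : G, ∃ l : List G, l.length ≤ D ∧ (∀ x ∈ l, x ∈ S) ∧ l.prod = g)
    {lam : ℝ} (hlam : lam ≠ 0) {v : G → ℝ} (hv : v ≠ 0)
    (heig : cayleyLaplacian S *ᵥ v = lam • v) : 1 ≤ (D : ℝ) ^ 2 * lam := by
  have hsum : ∑ x, v x = 0 := by
    have h := sum_cayleyLaplacian_mulVec S v
    rw [heig] at h
    simp only [Pi.smul_apply, smul_eq_mul, ← mul_sum] at h
    exact (mul_eq_zero.mp h).resolve_left hlam
  have hnorm : 0 < ∑ x, v x ^ 2 := by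
    obtain ⟨x, hx⟩ := Function.ne_iff.mp hv
    exact sum_pos' (fun _ _ => sq_nonneg _) ⟨x, mem_univ x, sq_pos_of_ne_zero hx⟩
  have henergy : cayleyEnergy S v = 2 * lam * ∑ x, v x ^ 2 := by
    simp only [cayleyEnergy_eq, heig, Pi.smul_apply, smul_eq_mul, mul_sum, sq, mul_assoc]
  have hword : ∀ g, ∑ x, (v (g * x) - v x) ^ 2 ≤ (D : ℝ) ^ 2 * cayleyEnergy S v := by
    intro g
    obtain ⟨l, hlen, hlS, rfl⟩ := hD g
    exact (sum_sq_sub_list_prod_le v hlS).trans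
      (mul_le_mul_of_nonneg_right (by gcongr) (cayleyEnergy_nonneg S v))
  have hcard : 0 < (Fintype.card G : ℝ) := by exact_mod_cast Fintype.card_pos
  have key : 2 * Fintype.card G * ∑ x, v x ^ 2 ≤
      Fintype.card G * ((D : ℝ) ^ 2 * (2 * lam * ∑ x, v x ^ 2)) :=
    calc 2 * Fintype.card G * ∑ x, v x ^ 2 = ∑ g, ∑ x, (v (g * x) - v x) ^ 2 := by
          rw [sum_sum_sq_sub_mul_left_eq, hsum]; ring
      _ ≤ ∑ _g : G, (D : ℝ) ^ 2 * cayleyEnergy S v := sum_le_sum fun g _ => hword g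
      _ = _ := by rw [sum_const, card_univ, nsmul_eq_mul, henergy]
  nlinarith [mul_pos hcard hnorm]

end

theorem stmt0_general {G : Type*} [Group G] [Fintype G] [DecidableEq G]
    (S : Finset G)
    (D : ℕ)
    (hD : IsLeast {d : ℕ | ∀ g : G, ∃ l : List G,
      l.length ≤ d ∧ (∀ x ∈ l, x ∈ S) ∧ l.prod = g} D)
    (Δ : Matrix G G ℝ)
    (hΔ : Δ = (S.card : ℝ) • (1 : Matrix G G ℝ) -
      Matrix.of fun x y => ((S.filter fun s => s * x = y).card : ℝ))
    (lam : ℝ) (hlam : lam ≠ 0)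
    (v : G → ℝ) (hv : v ≠ 0) (heig : Δ.mulVec v = lam • v) :
    lam ≥ 1 / ((S.card : ℝ) * (D : ℝ) ^ 2) := by
  subst hΔ
  have h := one_le_sq_mul_of_cayleyLaplacian_mulVec_eq hD.1 hlam hv heig
  have hpos : 0 < (D : ℝ) ^ 2 * lam := by linarith
  have hlam_pos : 0 < lam := pos_of_mul_pos_right hpos (sq_nonneg _)
  rcases Nat.eq_zero_or_pos S.card with hS | hS
  · simp [hS, hlam_pos.le]
  · have hD2 : 0 < (D : ℝ) ^ 2 := pos_of_mul_pos_left hpos hlam_pos.le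
    have hS' : (1 : ℝ) ≤ S.card := by exact_mod_cast hS
    rw [ge_iff_le, div_le_iff₀ (by positivity)]
    nlinarith

/-- Diaconis–Saloff-Coste bound: for a Cayley graph `C(G,S)` of a finite group `G`
with symmetric generating set `S`, every nonzero eigenvalue of the combinatorial
Laplacian `Δ = |S|·Id − A` is at least `1/(|S|·diam²)`. -/
theorem stmt0 {G : Type*} [Group G] [Fintype G] [DecidableEq G]
    (S : Finset G) (hsym : ∀ s ∈ S, s⁻¹ ∈ S)
    (hgen : Subgroup.closure (S : Set G) = ⊤)
    (D : ℕ)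
    (hD : IsLeast {d : ℕ | ∀ g : G, ∃ l : List G,
      l.length ≤ d ∧ (∀ x ∈ l, x ∈ S) ∧ l.prod = g} D)
    (Δ : Matrix G G ℝ)
    (hΔ : Δ = (S.card : ℝ) • (1 : Matrix G G ℝ) -
      Matrix.of fun x y => ((S.filter fun s => s * x = y).card : ℝ))
    (lam : ℝ) (hlam : lam ≠ 0)
    (v : G → ℝ) (hv : v ≠ 0) (heig : Δ.mulVec v = lam • v) :
    lam ≥ 1 / ((S.card : ℝ) * (D : ℝ) ^ 2) :=
  stmt0_general S D hD Δ hΔ lam hlam v hv heig
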